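/- (Corollary) Let f: [0,1]^d → ℝ be continuous, coordinatewise non-decreasing, and Lipschitz continuous (bounded partial derivatives). Then for every ε > 0 there exist K ≥ 1, group sizes h₁,…,h_K ≥ 1, a parameter β > 0, nonnegative weight vectors w^(k,j) ∈ ℝ^d and biases b^(k,j) ∈ ℝ such that the SMM network output y_SMM satisfies |f(x) − y_SMM(x)| < ε for all x ∈ [0,1]^d. -/

import Mathlib

/-- The scaled LogSumExp function: `LSE_β(x₁,…,xₙ) = (1/β)·log(∑ i, exp(β·xᵢ))`. -/
noncomputable def lse (β : ℝ) {n : ℕ} (x : Fin n → ℝ) : ℝ :=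
  (1 / β) * Real.log (∑ i, Real.exp (β * x i))

/-- Output of a smooth min-max (SMM) network:
`y_SMM(x) = LSE_{−β}(g^(1)(x),…,g^(K)(x))` with
`g^(k)(x) = LSE_β(a^(k,1)(x),…,a^(k,h_k)(x))` and `a^(k,j)(x) = w^(k,j)·x − b^(k,j)`. -/
noncomputable def smmOut {d K : ℕ} {h : Fin K → ℕ} (β : ℝ)
    (w : (k : Fin K) → Fin (h k) → Fin d → ℝ)
    (b : (k : Fin K) → Fin (h k) → ℝ) (x : Fin d → ℝ) : ℝ :=
  lse (-β) fun k => lse β fun j => (∑ i, w k j i * x i) - b k j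


/-!
Cover `[0,1]^d` by the grid of mesh `1/N` and attach to each grid point `p` the monotone
envelope `gₚ(x) = f p + C · max(0, maxᵢ (xᵢ - pᵢ))`. Monotonicity and the Lipschitz bound
(applied between `p` and `x ⊔ p`) give `f ≤ gₚ` on the cube, while at the grid point `p ≤ x`
nearest to `x` one has `gₚ(x) ≤ f x + C/N`; hence `minₚ gₚ` is within `C/N` of `f`. Each `gₚ` is
a maximum of `d + 1` affine maps with nonnegative weights, and `LSE_β` (resp. `LSE_{-β}`) of
`n` numbers lies within `log n / β` of their maximum (resp. minimum).
-/

open Real Filter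
open scoped NNReal

section LogSumExp

variable {β : ℝ} {n : ℕ}

lemma le_lse (hβ : 0 < β) (x : Fin n → ℝ) (j : Fin n) : x j ≤ lse β x := by
  have hpos : 0 < ∑ i, exp (β * x i) :=
    Finset.sum_pos (fun i _ => exp_pos _) ⟨j, Finset.mem_univ j⟩
  have : β * x j ≤ log (∑ i, exp (β * x i)) :=
    (le_log_iff_exp_le hpos).2 <|
      Finset.single_le_sum (f := fun i => exp (β * x i)) (fun i _ => (exp_pos _).le)
        (Finset.mem_univ j)
  rw [lse, one_div_mul_eq_div, le_div_iff₀ hβ]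
  linarith

lemma lse_le (hβ : 0 < β) (hn : 0 < n) (x : Fin n → ℝ) {M : ℝ} (hM : ∀ i, x i ≤ M) :
    lse β x ≤ M + log n / β := by
  have hpos : 0 < ∑ i, exp (β * x i) :=
    Finset.sum_pos (fun i _ => exp_pos _) ⟨⟨0, hn⟩, Finset.mem_univ _⟩
  have : log (∑ i, exp (β * x i)) ≤ log n + β * M := calc
    log (∑ i, exp (β * x i)) ≤ log (n * exp (β * M)) := by
      refine log_le_log hpos ?_
      simpa using Finset.sum_le_sum (s := Finset.univ) fun i _ =>
        exp_le_exp.2 (mul_le_mul_of_nonneg_left (hM i) hβ.le)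
    _ = log n + β * M := by rw [log_mul (by positivity) (exp_pos _).ne', log_exp]
  rw [lse, one_div_mul_eq_div, div_le_iff₀ hβ, add_mul, div_mul_cancel₀ _ hβ.ne']
  linarith

lemma lse_neg (β : ℝ) (x : Fin n → ℝ) : lse (-β) x = -lse β (-x) := by
  simp only [lse, one_div_neg_eq_neg_one_div, Pi.neg_apply, neg_mul, mul_neg]

lemma lse_neg_le (hβ : 0 < β) (x : Fin n → ℝ) (j : Fin n) : lse (-β) x ≤ x j := by
  linarith [lse_neg β x, le_lse hβ (-x) j, Pi.neg_apply x j]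

lemma le_lse_neg (hβ : 0 < β) (hn : 0 < n) (x : Fin n → ℝ) {m : ℝ} (hm : ∀ i, m ≤ x i) :
    m - log n / β ≤ lse (-β) x := by
  linarith [lse_neg β x, lse_le hβ hn (-x) (M := -m) fun i => neg_le_neg (hm i)]

end LogSumExp

section SmoothMinMax

variable {β : ℝ} {K : ℕ} {h : Fin K → ℕ}

lemma sub_log_div_le_lse_neg_lse (hβ : 0 < β) (hK : 0 < K) (a : (k : Fin K) → Fin (h k) → ℝ)
    {m : ℝ} (hm : ∀ k, ∃ j, m ≤ a k j) :
    m - log K / β ≤ lse (-β) fun k => lse β (a k) :=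
  le_lse_neg hβ hK _ fun k => (hm k).elim fun j hj => hj.trans (le_lse hβ (a k) j)

lemma lse_neg_lse_le (hβ : 0 < β) (a : (k : Fin K) → Fin (h k) → ℝ) (k : Fin K)
    (hk : 0 < h k) {M : ℝ} (hM : ∀ j, a k j ≤ M) :
    (lse (-β) fun k => lse β (a k)) ≤ M + log (h k) / β :=
  (lse_neg_le hβ _ k).trans (lse_le hβ hk (a k) hM)

end SmoothMinMax

theorem MonotoneOn.le_or_exists_le_add_mul_sub {ι : Type*} [Fintype ι] {s : Set (ι → ℝ)}
    {f : (ι → ℝ) → ℝ} {C : ℝ≥0} (hmono : MonotoneOn f s) (hlip : LipschitzOnWith C f s)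
    {x p : ι → ℝ} (hx : x ∈ s) (hp : p ∈ s) (hxp : x ⊔ p ∈ s) :
    f x ≤ f p ∨ ∃ i, f x ≤ f p + C * (x i - p i) := by
  by_cases hle : x ≤ p
  · exact .inl (hmono hx hp hle)
  obtain ⟨i₁, hi₁⟩ : ∃ i, p i < x i := by simpa [Pi.le_def] using hle
  have : Nonempty ι := ⟨i₁⟩
  obtain ⟨i, hi⟩ := Finite.exists_max fun i => x i - p i
  have hpos : 0 ≤ x i - p i := by linarith [hi i₁]
  have hdist : dist (x ⊔ p) p ≤ x i - p i := by
    refine (dist_pi_le_iff hpos).2 fun j => ?_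
    rw [Real.dist_eq, Pi.sup_apply, ← max_sub_sub_right, sub_self,
      abs_of_nonneg (le_max_right _ _)]
    exact max_le (hi j) hpos
  refine .inr ⟨i, ?_⟩
  calc f x ≤ f (x ⊔ p) := hmono hx hxp le_sup_left
    _ ≤ f p + C * dist (x ⊔ p) p := by
      linarith [le_abs_self (f (x ⊔ p) - f p), hlip.dist_le_mul _ hxp _ hp,
        Real.dist_eq (f (x ⊔ p)) (f p)]
    _ ≤ f p + C * (x i - p i) := by gcongr

section Hinge

variable {d : ℕ}

/-- The affine pieces `f p + C (xᵢ - pᵢ)`, `i < d`, and the constant `f p`, whose maximum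
`f p + C max(0, maxᵢ (xᵢ - pᵢ))` is a monotone upper envelope of `f` touching it at `p`. -/
def hingePieces (C : ℝ≥0) (f : (Fin d → ℝ) → ℝ) (p x : Fin d → ℝ) : Fin (d + 1) → ℝ :=
  Fin.snoc (α := fun _ => ℝ) (fun i => f p + C * (x i - p i)) (f p)

def hingeWeight (C : ℝ≥0) (j : Fin (d + 1)) (i : Fin d) : ℝ :=
  if j = i.castSucc then C else 0

def hingeBias (C : ℝ≥0) (f : (Fin d → ℝ) → ℝ) (p : Fin d → ℝ) : Fin (d + 1) → ℝ :=
  Fin.snoc (α := fun _ => ℝ) (fun i => C * p i - f p) (-f p)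

variable {C : ℝ≥0} {f : (Fin d → ℝ) → ℝ} {p x : Fin d → ℝ}

lemma hingeWeight_nonneg (j : Fin (d + 1)) (i : Fin d) : 0 ≤ hingeWeight C j i := by
  unfold hingeWeight; split_ifs <;> simp

lemma hingePieces_eq_sum_sub (j : Fin (d + 1)) :
    hingePieces C f p x j = ∑ i, hingeWeight C j i * x i - hingeBias C f p j := by
  cases j using Fin.lastCases with
  | last => simp [hingePieces, hingeWeight, hingeBias, (Fin.castSucc_ne_last _).symm]
  | cast j => simp [hingePieces, hingeWeight, hingeBias]; ring

lemma exists_le_hingePieces (hmono : MonotoneOn f (Set.Icc 0 1))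
    (hlip : LipschitzOnWith C f (Set.Icc 0 1)) (hx : x ∈ Set.Icc 0 1) (hp : p ∈ Set.Icc 0 1) :
    ∃ j, f x ≤ hingePieces C f p x j := by
  have hxp : x ⊔ p ∈ Set.Icc 0 1 := ⟨le_sup_of_le_left hx.1, sup_le hx.2 hp.2⟩
  rcases hmono.le_or_exists_le_add_mul_sub hlip hx hp hxp with hle | ⟨i, hle⟩
  · exact ⟨Fin.last d, by simpa [hingePieces] using hle⟩
  · exact ⟨i.castSucc, by simpa [hingePieces] using hle⟩

lemma hingePieces_le (hmono : MonotoneOn f (Set.Icc 0 1)) (hx : x ∈ Set.Icc 0 1)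
    (hp : p ∈ Set.Icc 0 1) (hpx : p ≤ x) {δ : ℝ} (hδ : 0 ≤ δ) (hxδ : ∀ i, x i - p i ≤ δ)
    (j : Fin (d + 1)) : hingePieces C f p x j ≤ f x + C * δ := by
  have hfp : f p ≤ f x := hmono hp hx hpx
  cases j using Fin.lastCases with
  | last =>
    simp only [hingePieces, Fin.snoc_last]
    linarith [mul_nonneg C.coe_nonneg hδ]
  | cast i =>
    simp only [hingePieces, Fin.snoc_castSucc]
    linarith [mul_le_mul_of_nonneg_left (hxδ i) C.coe_nonneg]

end Hinge

section Grid

variable {ι : Type*} {N : ℕ}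

lemma nat_div_mem_Icc (m : ι → Fin (N + 1)) : (fun i => (m i : ℝ) / N) ∈ Set.Icc 0 1 :=
  ⟨fun i => by positivity,
    fun i => div_le_one_of_le₀ (Nat.cast_le.2 (Fin.is_le (m i))) N.cast_nonneg⟩

lemma exists_nat_div_le_sub_le (hN : 0 < N) {x : ι → ℝ} (hx : x ∈ Set.Icc 0 1) :
    ∃ m : ι → Fin (N + 1), (fun i => (m i : ℝ) / N) ≤ x ∧ ∀ i, x i - m i / N ≤ 1 / N := by
  have hNR : (0 : ℝ) < N := by exact_mod_cast hN
  have hxN (i : ι) : 0 ≤ x i * N := mul_nonneg (hx.1 i) hNR.le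
  refine ⟨fun i => ⟨⌊x i * N⌋₊, Nat.lt_succ_of_le (Nat.floor_le_of_le ?_)⟩,
    fun i => ?_, fun i => ?_⟩
  · exact mul_le_of_le_one_left N.cast_nonneg (hx.2 i)
  · show (⌊x i * N⌋₊ : ℝ) / N ≤ x i
    rw [div_le_iff₀ hNR]
    exact Nat.floor_le (hxN i)
  · show x i - ⌊x i * N⌋₊ / N ≤ 1 / N
    rw [sub_le_iff_le_add', ← add_div, le_div_iff₀ hNR]
    exact (Nat.lt_floor_add_one (x i * N)).le

end Grid

theorem smm_universal_approximation_general {d : ℕ} (f : (Fin d → ℝ) → ℝ)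
    (hmono : MonotoneOn f (Set.Icc 0 1))
    (hlip : ∃ C : NNReal, LipschitzOnWith C f (Set.Icc 0 1))
    (ε : ℝ) (hε : 0 < ε) :
    ∃ (K : ℕ) (_ : 0 < K) (h : Fin K → ℕ) (_ : ∀ k, 0 < h k) (β : ℝ) (_ : 0 < β)
      (w : (k : Fin K) → Fin (h k) → Fin d → ℝ)
      (b : (k : Fin K) → Fin (h k) → ℝ),
      (∀ k j i, 0 ≤ w k j i) ∧
      ∀ x ∈ Set.Icc (0 : Fin d → ℝ) 1, |f x - smmOut β w b x| < ε := by
  obtain ⟨C, hC⟩ := hlip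
  obtain ⟨N, hCN, hN⟩ : ∃ N : ℕ, (C : ℝ) / N < ε / 2 ∧ 0 < N :=
    (((tendsto_const_div_atTop_nhds_zero_nat (C : ℝ)).eventually (gt_mem_nhds (half_pos hε))).and
      (eventually_gt_atTop 0)).exists
  let e : (Fin d → Fin (N + 1)) ≃ Fin ((N + 1) ^ d) := finFunctionFinEquiv
  let p (k : Fin ((N + 1) ^ d)) (i : Fin d) : ℝ := (e.symm k i : ℝ) / N
  have hdiv (a : ℝ) {δ : ℝ} (hδ : 0 < δ) : ∀ᶠ β in atTop, a / β < δ :=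
    (tendsto_const_nhds.div_atTop tendsto_id).eventually (gt_mem_nhds hδ)
  obtain ⟨β, hβK, hβd, hβ⟩ : ∃ β : ℝ, log ((N + 1) ^ d : ℕ) / β < ε / 2 ∧
      log (d + 1 : ℕ) / β < ε / 2 ∧ 0 < β :=
    ((hdiv _ (half_pos hε)).and ((hdiv _ (half_pos hε)).and (eventually_gt_atTop 0))).exists
  refine ⟨_, by positivity, fun _ => d + 1, fun _ => d.succ_pos, β, hβ, fun _ => hingeWeight C,
    fun k => hingeBias C f (p k), fun _ => hingeWeight_nonneg, fun x hx => ?_⟩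
  have hy : smmOut β (fun _ => hingeWeight C) (fun k => hingeBias C f (p k)) x =
      lse (-β) fun k => lse β (hingePieces C f (p k) x) := by
    simp only [smmOut, ← hingePieces_eq_sum_sub]
  obtain ⟨m, hmx, hxm⟩ := exists_nat_div_le_sub_le hN hx
  have lower := sub_log_div_le_lse_neg_lse hβ (by positivity)
    (fun k => hingePieces C f (p k) x) fun k =>
    exists_le_hingePieces hmono hC hx (nat_div_mem_Icc (e.symm k))
  have upper := lse_neg_lse_le hβ (fun k => hingePieces C f (p k) x) (e m) d.succ_pos fun j =>
    hingePieces_le (p := p (e m)) (δ := 1 / N) hmono hx (nat_div_mem_Icc _)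
      (by simpa [p] using hmx) (by positivity) (by simpa [p] using hxm) j
  rw [← div_eq_mul_one_div] at upper
  rw [hy, abs_sub_lt_iff]
  constructor <;> linarith

/-- (Corollary) Every continuous, coordinatewise non-decreasing, Lipschitz function
`f : [0,1]^d → ℝ` can be approximated uniformly to within any `ε > 0` by a
smooth min-max network with nonnegative weights and some parameter `β > 0`. -/
theorem smm_universal_approximation {d : ℕ} (f : (Fin d → ℝ) → ℝ)
    (hcont : ContinuousOn f (Set.Icc 0 1))
    (hmono : MonotoneOn f (Set.Icc 0 1))
    (hlip : ∃ C : NNReal, LipschitzOnWith C f (Set.Icc 0 1))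
    (ε : ℝ) (hε : 0 < ε) :
    ∃ (K : ℕ) (_ : 0 < K) (h : Fin K → ℕ) (_ : ∀ k, 0 < h k) (β : ℝ) (_ : 0 < β)
      (w : (k : Fin K) → Fin (h k) → Fin d → ℝ)
      (b : (k : Fin K) → Fin (h k) → ℝ),
      (∀ k j i, 0 ≤ w k j i) ∧
      ∀ x ∈ Set.Icc (0 : Fin d → ℝ) 1, |f x - smmOut β w b x| < ε :=
  smm_universal_approximation_general f hmono hlip ε hε
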